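/- Let π = π₁π₂⋯π_n be a minimal permutation with ascent sequence (a₁, a₂, …, a_k). Then a_i ≥ 2 for all 1 ≤ i ≤ k; equivalently, π has no two consecutive ascents, and π starts and ends with a descent. -/

import Mathlib

/-- `i` (1-based) is a descent of the word `w`, i.e. `1 ≤ i ≤ w.length - 1` and
`w_i > w_{i+1}` (1-based entries). -/
def DescentAt (w : List ℕ) (i : ℕ) : Prop :=
  1 ≤ i ∧ i + 1 ≤ w.length ∧ w.getD i 0 < w.getD (i - 1) 0

instance (w : List ℕ) (i : ℕ) : Decidable (DescentAt w i) :=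
  inferInstanceAs (Decidable (_ ∧ _ ∧ _))

/-- `i` (1-based) is an ascent of the word `w`. -/
def AscentAt (w : List ℕ) (i : ℕ) : Prop :=
  1 ≤ i ∧ i + 1 ≤ w.length ∧ w.getD (i - 1) 0 < w.getD i 0

instance (w : List ℕ) (i : ℕ) : Decidable (AscentAt w i) :=
  inferInstanceAs (Decidable (_ ∧ _ ∧ _))

/-- The set of descent positions of `w`. -/
def descents (w : List ℕ) : Finset ℕ :=
  (Finset.range w.length).filter (fun i => DescentAt w i)

/-- `w` is a permutation of `[n] = {1,…,n}`, written as a word. -/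
def IsPermWord (n : ℕ) (w : List ℕ) : Prop :=
  w.length = n ∧ w.Nodup ∧ ∀ x ∈ w, 1 ≤ x ∧ x ≤ n

/-- Two words of distinct entries are in the same relative order. -/
def SameRelOrder (u v : List ℕ) : Prop :=
  u.length = v.length ∧
    ∀ p q, p < u.length → q < u.length →
      (u.getD p 0 < u.getD q 0 ↔ v.getD p 0 < v.getD q 0)

/-- `σ ≺ w`: the word `w` contains the pattern `σ`, i.e. `w` has a subsequence
in the same relative order as `σ`. -/
def ContainsPattern (σ w : List ℕ) : Prop :=
  ∃ s : List ℕ, s.Sublist w ∧ SameRelOrder s σ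

/-- `w` is a minimal permutation with `d` descents: it has exactly `d` descents and
no strictly shorter permutation with exactly `d` descents occurs in it as a pattern. -/
def MinimalPerm (d : ℕ) (w : List ℕ) : Prop :=
  (descents w).card = d ∧
    ∀ (m : ℕ) (σ : List ℕ), IsPermWord m σ → m < w.length →
      (descents σ).card = d → ¬ ContainsPattern σ w

/-- `w` is a minimal permutation (with its own number of descents). -/
def IsMinimal (w : List ℕ) : Prop :=
  MinimalPerm (descents w).card w

/-- The set `𝓕_d(n)` of minimal permutations of length `n` with `d` descents. -/
def minimalPerms (d n : ℕ) : Set (List ℕ) :=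
  {w | IsPermWord n w ∧ MinimalPerm d w}

/-- `f_d(n) = |𝓕_d(n)|`. -/
noncomputable def fCount (d n : ℕ) : ℕ :=
  (minimalPerms d n).ncard

/-- `w` has ascent sequence `a`: `w` decomposes into maximal strictly decreasing
runs whose lengths, from left to right, are the entries of `a` (maximality is
expressed by the junctions between consecutive runs being ascents). -/
def HasAscentSeq (w a : List ℕ) : Prop :=
  ∃ bs : List (List ℕ), bs.flatten = w ∧ bs.map List.length = a ∧
    (∀ b ∈ bs, b ≠ [] ∧ List.Chain' (fun x y => x > y) b) ∧
    List.Chain' (fun b c => ∃ x ∈ b.getLast?, ∃ y ∈ c.head?, x < y) bs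

/-- The set `𝓕_{a₁,…,a_k}(n)` of minimal permutations of length `n` with
ascent sequence `a = (a₁,…,a_k)`. -/
def minimalPermsAsc (n : ℕ) (a : List ℕ) : Set (List ℕ) :=
  {w | IsPermWord n w ∧ IsMinimal w ∧ HasAscentSeq w a}

/-- `F_{a₁,…,a_k}(n) = |𝓕_{a₁,…,a_k}(n)|`. -/
noncomputable def FCount (n : ℕ) (a : List ℕ) : ℕ :=
  (minimalPermsAsc n a).ncard

/-- A standard filling of a given cell set by `1,…,N`: zero off the cells,
a bijection from the cells onto `{1,…,N}`, strictly increasing along rows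
(second coordinate) and columns (first coordinate). -/
def IsTableauOn (cell : ℕ → ℕ → Prop) (N : ℕ) (T : ℕ → ℕ → ℕ) : Prop :=
  (∀ r c, ¬ cell r c → T r c = 0) ∧
  (∀ r c, cell r c → 1 ≤ T r c ∧ T r c ≤ N) ∧
  (∀ r c r' c', cell r c → cell r' c' → T r c = T r' c' → r = r' ∧ c = c') ∧
  (∀ v, 1 ≤ v → v ≤ N → ∃ r c, cell r c ∧ T r c = v) ∧
  (∀ r c, cell r c → cell r (c + 1) → T r c < T r (c + 1)) ∧
  (∀ r c, cell r c → cell (r + 1) c → T r c < T (r + 1) c)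

/-- The cells of the skew shape `λ/μ` (rows indexed from `0` downward,
columns from `0` rightward): row `r` contains columns `μ_r ≤ c < λ_r`. -/
def skewCell (l m : List ℕ) (r c : ℕ) : Prop :=
  r < l.length ∧ m.getD r 0 ≤ c ∧ c < l.getD r 0

/-- A standard skew Young tableau of shape `λ/μ`. -/
def IsSkewSYT (l m : List ℕ) (T : ℕ → ℕ → ℕ) : Prop :=
  IsTableauOn (skewCell l m) (l.sum - m.sum) T

/-- `f^{λ/μ}`, the number of standard skew Young tableaux of shape `λ/μ`. -/
noncomputable def skewSYTCount (l m : List ℕ) : ℕ :=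
  Nat.card {T : ℕ → ℕ → ℕ // IsSkewSYT l m T}

/-- The row index of the top cell of column `c` in the 2-regular skew shape
with column lengths `a₁,…,a_k` (columns normalized so that the last column
starts in row `0`; consecutive columns overlap in exactly two rows). -/
def colTop (a : List ℕ) (c : ℕ) : ℕ :=
  (a.drop (c + 1)).sum - 2 * (a.length - 1 - c)

/-- The cells of the 2-regular skew shape with column lengths `a₁,…,a_k`:
column `c` occupies the `a_c` rows starting at `colTop a c`, so that any two
consecutive columns overlap in exactly two rows. -/
def twoRegCell (a : List ℕ) (r c : ℕ) : Prop :=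
  c < a.length ∧ colTop a c ≤ r ∧ r < colTop a c + a.getD c 0

/-- A 2-regular skew tableau with column lengths `a₁,…,a_k`: a standard filling
of the 2-regular skew shape by `1,…,a₁+⋯+a_k`. -/
def Is2RegularTableau (a : List ℕ) (T : ℕ → ℕ → ℕ) : Prop :=
  IsTableauOn (twoRegCell a) a.sum T

/-- `𝓜_{2n+1,2i}`: minimal permutations of length `2n+1` with `n+1` descents whose
unique pair of consecutive descents is `(2i-1, 2i)`. -/
def Mset (n i : ℕ) : Set (List ℕ) :=
  {w | IsPermWord (2 * n + 1) w ∧ MinimalPerm (n + 1) w ∧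
    DescentAt w (2 * i - 1) ∧ DescentAt w (2 * i) ∧
    ∀ j, DescentAt w j → DescentAt w (j + 1) → j = 2 * i - 1}

/-- Elementary Knuth transformations on words of distinct integers. -/
inductive KnuthStep : List ℕ → List ℕ → Prop
  | k1 (u v : List ℕ) (x y z : ℕ) (hxy : x < y) (hyz : y < z) :
      KnuthStep (u ++ [x, z, y] ++ v) (u ++ [z, x, y] ++ v)
  | k2 (u v : List ℕ) (x y z : ℕ) (hxy : x < y) (hyz : y < z) :
      KnuthStep (u ++ [y, x, z] ++ v) (u ++ [y, z, x] ++ v)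

/-- Knuth equivalence of words. -/
def KnuthEquiv : List ℕ → List ℕ → Prop := Relation.EqvGen KnuthStep

/-!
Deleting an entry of a permutation and standardizing the rest gives a shorter pattern, so in a
minimal permutation every such deletion must destroy a descent. Deleting the middle entry of a
double ascent, the first entry of an initial ascent or the last entry of a final ascent destroys
none. A maximal decreasing run of length one is preceded by an ascent or the start of the word and
followed by an ascent or its end, so it produces one of these configurations unless the word has
length one.
-/

theorem not_descentAt_zero (w : List ℕ) : ¬ DescentAt w 0 :=
  fun h => Nat.not_succ_le_zero 0 h.1

theorem descentAt_cons_add_two (x : ℕ) (w : List ℕ) (i : ℕ) :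
    DescentAt (x :: w) (i + 2) ↔ DescentAt w (i + 1) := by
  simp only [DescentAt, List.length_cons, show i + 2 - 1 = i + 1 from rfl, List.getD_cons_succ,
    Nat.add_sub_cancel]
  omega

theorem ascentAt_append_cons_cons (u : List ℕ) (p q : ℕ) (v : List ℕ) :
    AscentAt (u ++ p :: q :: v) (u.length + 1) ↔ p < q := by
  simp [AscentAt]

theorem descentAt_append_cons_cons (u : List ℕ) (p q : ℕ) (v : List ℕ) :
    DescentAt (u ++ p :: q :: v) (u.length + 1) ↔ q < p := by
  simp [DescentAt]

theorem card_descents_eq_sum (w : List ℕ) :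
    (descents w).card = ∑ i ∈ Finset.range w.length, if DescentAt w i then 1 else 0 :=
  Finset.card_filter _ _

theorem card_descents_singleton (p : ℕ) : (descents [p]).card = 0 := by
  simp [card_descents_eq_sum, not_descentAt_zero]

theorem card_descents_cons_cons (a b : ℕ) (t : List ℕ) :
    (descents (a :: b :: t)).card = (if b < a then 1 else 0) + (descents (b :: t)).card := by
  have h1 : DescentAt (a :: b :: t) 1 ↔ b < a := descentAt_append_cons_cons [] a b t
  simp only [card_descents_eq_sum, List.length_cons, Finset.sum_range_succ' _ (t.length + 1),
    Finset.sum_range_succ' _ t.length, descentAt_cons_add_two, zero_add, h1, not_descentAt_zero,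
    if_false, add_zero]
  exact add_comm _ _

theorem card_descents_append_cons (u : List ℕ) (p : ℕ) (t : List ℕ) :
    (descents (u ++ p :: t)).card = (descents (u ++ [p])).card + (descents (p :: t)).card := by
  induction u with
  | nil => simp [card_descents_singleton]
  | cons a u ih =>
    cases u with
    | nil => simp [card_descents_cons_cons, card_descents_singleton]
    | cons b u =>
      simp only [List.cons_append, card_descents_cons_cons] at ih ⊢
      omega

theorem sameRelOrder_map_of_strictMonoOn {s : List ℕ} {f : ℕ → ℕ}
    (hf : StrictMonoOn f {x | x ∈ s}) : SameRelOrder s (s.map f) := by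
  refine ⟨(List.length_map _).symm, fun p q hp hq => ?_⟩
  rw [List.getD_eq_getElem _ _ hp, List.getD_eq_getElem _ _ hq,
    List.getD_eq_getElem _ _ (by simpa using hp), List.getD_eq_getElem _ _ (by simpa using hq),
    List.getElem_map, List.getElem_map]
  exact (hf.lt_iff_lt (List.getElem_mem hp) (List.getElem_mem hq)).symm

theorem strictMonoOn_card_filter_lt (S : Finset ℕ) :
    StrictMonoOn (fun x => (S.filter (· < x)).card) S := by
  intro x hx y _ hxy
  apply Finset.card_lt_card
  refine (Finset.ssubset_iff_of_subset fun z hz => ?_).2 ⟨x, ?_, ?_⟩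
  · simp only [Finset.mem_filter] at hz ⊢
    exact ⟨hz.1, hz.2.trans hxy⟩
  · simpa using ⟨hx, hxy⟩
  · simp

theorem card_filter_lt_lt_card {S : Finset ℕ} {x : ℕ} (hx : x ∈ S) :
    (S.filter (· < x)).card < S.card :=
  Finset.card_lt_card (Finset.filter_ssubset.2 ⟨x, hx, lt_irrefl x⟩)

theorem exists_isPermWord_sameRelOrder {s : List ℕ} (hs : s.Nodup) :
    ∃ σ, IsPermWord s.length σ ∧ SameRelOrder s σ := by
  set rank : ℕ → ℕ := fun x => (s.toFinset.filter (· < x)).card + 1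
  have hrank : StrictMonoOn rank {x | x ∈ s} := fun x hx y hy hxy =>
    Nat.succ_lt_succ (strictMonoOn_card_filter_lt s.toFinset (by simpa using hx)
      (by simpa using hy) hxy)
  refine ⟨s.map rank, ⟨List.length_map _, hs.map_on fun x hx y hy => hrank.injOn hx hy, ?_⟩,
    sameRelOrder_map_of_strictMonoOn hrank⟩
  simp only [List.mem_map, forall_exists_index, and_imp, forall_apply_eq_imp_iff₂]
  intro x hx
  have := card_filter_lt_lt_card (List.mem_toFinset.2 hx)
  rw [List.toFinset_card_of_nodup hs] at this
  exact ⟨Nat.succ_pos _, this⟩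

theorem SameRelOrder.descents_eq {u v : List ℕ} (h : SameRelOrder u v) :
    descents u = descents v := by
  obtain ⟨hlen, hrel⟩ := h
  ext i
  simp only [descents, Finset.mem_filter, Finset.mem_range]
  simp only [DescentAt, ← hlen]
  constructor
  · rintro ⟨h1, h2, h3, h4⟩
    exact ⟨h1, h2, h3, (hrel i (i - 1) (by omega) (by omega)).mp h4⟩
  · rintro ⟨h1, h2, h3, h4⟩
    exact ⟨h1, h2, h3, (hrel i (i - 1) (by omega) (by omega)).mpr h4⟩

theorem IsMinimal.card_descents_ne_of_sublist {w s : List ℕ} (hnd : w.Nodup)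
    (hmin : IsMinimal w) (hsub : s.Sublist w) (hlen : s.length < w.length) :
    (descents s).card ≠ (descents w).card := by
  intro hcard
  obtain ⟨σ, hσ, hrel⟩ := exists_isPermWord_sameRelOrder (hsub.nodup hnd)
  exact hmin.2 s.length σ hσ hlen (hrel.descents_eq ▸ hcard) ⟨s, hsub, hrel⟩

theorem IsMinimal.not_double_ascent {u v : List ℕ} {p x q : ℕ}
    (hnd : (u ++ p :: x :: q :: v).Nodup) (hmin : IsMinimal (u ++ p :: x :: q :: v)) :
    ¬ (p < x ∧ x < q) := by
  rintro ⟨hpx, hxq⟩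
  refine hmin.card_descents_ne_of_sublist hnd (s := u ++ p :: q :: v)
    (((List.sublist_cons_self x _).cons_cons p).append_left u) (by simp) ?_
  rw [card_descents_append_cons u p (q :: v), card_descents_append_cons u p (x :: q :: v),
    card_descents_cons_cons, card_descents_cons_cons, card_descents_cons_cons]
  simp [hpx.not_gt, hxq.not_gt, (hpx.trans hxq).not_gt]

theorem IsMinimal.lt_of_cons_cons {v : List ℕ} {p x : ℕ} (hnd : (p :: x :: v).Nodup)
    (hmin : IsMinimal (p :: x :: v)) : x < p := by
  refine (lt_or_gt_of_ne fun h => ?_).resolve_right fun hpx => ?_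
  · exact (List.nodup_cons.1 hnd).1 (h ▸ List.mem_cons_self)
  · refine hmin.card_descents_ne_of_sublist hnd (List.sublist_cons_self p _) (by simp) ?_
    simp [card_descents_cons_cons p, hpx.not_gt]

theorem IsMinimal.lt_of_append_pair {u : List ℕ} {p x : ℕ} (hnd : (u ++ [p, x]).Nodup)
    (hmin : IsMinimal (u ++ [p, x])) : x < p := by
  refine (lt_or_gt_of_ne fun h => ?_).resolve_right fun hpx => ?_
  · simp [h, List.nodup_append] at hnd
  · refine hmin.card_descents_ne_of_sublist hnd (s := u ++ [p])
      (((List.nil_sublist [x]).cons_cons p).append_left u) (by simp) ?_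
    rw [card_descents_append_cons u p [x], card_descents_cons_cons, card_descents_singleton]
    simp [hpx.not_gt]

theorem IsMinimal.eq_nil_of_isolated {U V : List ℕ} {x : ℕ} (hnd : (U ++ x :: V).Nodup)
    (hmin : IsMinimal (U ++ x :: V)) (hU : ∀ p ∈ U.getLast?, p < x)
    (hV : ∀ q ∈ V.head?, x < q) : U = [] ∧ V = [] := by
  rcases V with _ | ⟨q, V⟩ <;> rcases U.eq_nil_or_concat' with rfl | ⟨U, p, rfl⟩
  · exact ⟨rfl, rfl⟩
  · simp only [List.append_assoc, List.cons_append, List.nil_append] at hnd hmin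
    exact absurd (hmin.lt_of_append_pair hnd) (hU p (by simp)).not_gt
  · exact absurd (hmin.lt_of_cons_cons hnd) (hV q rfl).not_gt
  · simp only [List.append_assoc, List.cons_append, List.nil_append] at hnd hmin
    exact absurd ⟨hU p (by simp), hV q rfl⟩ (hmin.not_double_ascent hnd)

theorem HasAscentSeq.pos_of_mem {w a : List ℕ} (ha : HasAscentSeq w a) {z : ℕ} (hz : z ∈ a) :
    0 < z := by
  obtain ⟨bs, -, rfl, hbs, -⟩ := ha
  obtain ⟨b, hb, rfl⟩ := List.mem_map.1 hz
  exact List.length_pos_iff.2 (hbs b hb).1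

theorem HasAscentSeq.exists_isolated {w a : List ℕ} (ha : HasAscentSeq w a) (h1 : 1 ∈ a) :
    ∃ U x V, w = U ++ x :: V ∧ (∀ p ∈ U.getLast?, p < x) ∧
      (∀ q ∈ V.head?, x < q) := by
  obtain ⟨bs, rfl, rfl, hbs, hch⟩ := ha
  obtain ⟨b, hb, hb1⟩ := List.mem_map.1 h1
  obtain ⟨x, rfl⟩ := List.length_eq_one_iff.1 hb1
  obtain ⟨B, C, rfl⟩ := List.append_of_mem hb
  refine ⟨B.flatten, x, C.flatten, by simp, ?_, ?_⟩
  · rcases B.eq_nil_or_concat' with rfl | ⟨B, c, rfl⟩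
    · simp
    obtain ⟨c, p, rfl⟩ := (c.eq_nil_or_concat').resolve_left (hbs c (by simp)).1
    rw [List.append_assoc, List.singleton_append] at hch
    simpa using (List.isChain_append_cons_cons.1 hch).2.1
  · rcases C with _ | ⟨c, C⟩
    · simp
    obtain ⟨q, c, rfl⟩ := List.exists_cons_of_ne_nil (hbs c (by simp)).1
    simpa using (List.isChain_append_cons_cons.1 hch).2.1

theorem IsMinimal.not_ascentAt_succ {w : List ℕ} (hnd : w.Nodup) (hmin : IsMinimal w) {i : ℕ}
    (h : AscentAt w i) : ¬ AscentAt w (i + 1) := by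
  intro h'
  have hi : 1 ≤ i := h.1
  have hilen : i + 1 ≤ w.length := h.2.1
  obtain ⟨u, r, rfl, rfl⟩ : ∃ u r, w = u ++ r ∧ u.length + 1 = i :=
    ⟨w.take (i - 1), w.drop (i - 1), (List.take_append_drop _ _).symm, by simp; omega⟩
  obtain ⟨p, x, q, v, rfl⟩ : ∃ p x q v, r = p :: x :: q :: v := by
    have hlen : u.length + 3 ≤ (u ++ r).length := h'.2.1
    rcases r with _ | ⟨p, _ | ⟨x, _ | ⟨q, v⟩⟩⟩ <;> simp at hlen ⊢
  refine hmin.not_double_ascent hnd ⟨?_, ?_⟩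
  · exact (ascentAt_append_cons_cons u p x _).1 h
  · exact (ascentAt_append_cons_cons (u ++ [p]) x q v).1 (by simpa using h')

theorem IsMinimal.descentAt_one {w : List ℕ} (hnd : w.Nodup) (hmin : IsMinimal w)
    (hlen : 2 ≤ w.length) : DescentAt w 1 := by
  obtain ⟨p, x, v, rfl⟩ : ∃ p x v, w = p :: x :: v := by
    rcases w with _ | ⟨p, _ | ⟨x, v⟩⟩ <;> simp at hlen ⊢
  exact (descentAt_append_cons_cons [] p x v).2 (hmin.lt_of_cons_cons hnd)

theorem IsMinimal.descentAt_length_sub_one {w : List ℕ} (hnd : w.Nodup) (hmin : IsMinimal w)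
    (hlen : 2 ≤ w.length) : DescentAt w (w.length - 1) := by
  obtain ⟨u, p, x, rfl⟩ : ∃ u p x, w = u ++ [p, x] := by
    rcases w.eq_nil_or_concat' with rfl | ⟨w, x, rfl⟩
    · simp at hlen
    rcases w.eq_nil_or_concat' with rfl | ⟨u, p, rfl⟩
    · simp at hlen
    exact ⟨u, p, x, by simp⟩
  simpa using (descentAt_append_cons_cons u p x []).2 (hmin.lt_of_append_pair hnd)

theorem IsMinimal.two_le_of_hasAscentSeq {w a : List ℕ} (hnd : w.Nodup) (hmin : IsMinimal w)
    (hlen : 2 ≤ w.length) (ha : HasAscentSeq w a) {z : ℕ} (hz : z ∈ a) : 2 ≤ z := by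
  have hpos := ha.pos_of_mem hz
  by_contra! hz1
  obtain rfl : z = 1 := by omega
  obtain ⟨U, x, V, rfl, hU, hV⟩ := ha.exists_isolated hz
  obtain ⟨rfl, rfl⟩ := hmin.eq_nil_of_isolated hnd hU hV
  simp at hlen

/-- if `w` is a minimal permutation (with at least one descent) having
ascent sequence `a = (a₁,…,a_k)`, then every `aᵢ ≥ 2`; equivalently, `w` has no two
consecutive ascents and starts and ends with a descent. -/
theorem ascentSeq_entries_ge_two (n : ℕ) (w a : List ℕ) (hw : IsPermWord n w)
    (hmin : IsMinimal w) (hd : 1 ≤ (descents w).card) (ha : HasAscentSeq w a) :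
    (∀ x ∈ a, 2 ≤ x) ∧ (∀ i, AscentAt w i → ¬ AscentAt w (i + 1)) ∧
      DescentAt w 1 ∧ DescentAt w (w.length - 1) := by
  have hnd : w.Nodup := hw.2.1
  have hlen : 2 ≤ w.length := by
    obtain ⟨i, hi⟩ := Finset.card_pos.mp hd
    obtain ⟨h1, h2, -⟩ := (Finset.mem_filter.1 hi).2
    omega
  exact ⟨fun _ => hmin.two_le_of_hasAscentSeq hnd hlen ha, fun _ => hmin.not_ascentAt_succ hnd,
    hmin.descentAt_one hnd hlen, hmin.descentAt_length_sub_one hnd hlen⟩
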